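/- arXiv:1807.11361 — 5 statements merged into one kernel-verified Lean document; each statement's English description precedes it below -/
import Mathlib

section
/- The function u(x,t) = 1 - 4/(1 + 4(x - 6t - x₀)²) is a solution of the mKdV equation u_t + 6u²u_x + u_xxx = 0 for any real x₀. -/
/-!
The solution is a travelling wave `u x t = φ (x - 6 t - x₀)` with the rational profile
`φ y = 1 - 4 / (1 + 4 y²)`. For a wave of speed `6`, `∂ₜ u = -6 φ'` and `∂ₓ` acts as `d/dy`,
so the equation reduces to the ODE `φ''' + 6 (φ² - 1) φ' = 0`, a rational identity once `φ'`,
`φ''` and `φ'''` are computed explicitly.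
-/

section TravellingWave

variable (φ : ℝ → ℝ)

-- `deriv` commutes with affine changes of variable, so `φ` need not be differentiable.
theorem deriv_travellingWave_time (c a x t : ℝ) :
    deriv (fun s => φ (x - c * s - a)) t = -c * deriv φ (x - c * t - a) := by
  have h := deriv_comp_mul_left (f := fun z => φ (x - a - z)) (c := c) (x := t)
  simp only [deriv_comp_const_sub, smul_eq_mul] at h
  rw [show x - c * t - a = x - a - c * t by ring, neg_mul_comm, ← h]
  congr 1 with s
  congr 1
  ring

theorem deriv_comp_sub_const_funext (b : ℝ) :
    deriv (fun y => φ (y - b)) = fun y => deriv φ (y - b) :=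
  funext fun _ => deriv_comp_sub_const φ b _

end TravellingWave

noncomputable def mkdvRationalProfile (y : ℝ) : ℝ := 1 - 4 / (1 + 4 * y ^ 2)

section Profile

variable (y : ℝ)

theorem one_add_four_mul_sq_ne_zero : 1 + 4 * y ^ 2 ≠ 0 := by positivity

theorem hasDerivAt_one_add_four_mul_sq :
    HasDerivAt (fun y : ℝ => 1 + 4 * y ^ 2) (8 * y) y := by
  refine (((hasDerivAt_pow 2 y).const_mul 4).const_add 1).congr_deriv ?_
  push_cast
  ring

theorem hasDerivAt_mkdvRationalProfile :
    HasDerivAt mkdvRationalProfile (32 * y / (1 + 4 * y ^ 2) ^ 2) y := by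
  have := one_add_four_mul_sq_ne_zero y
  refine (((hasDerivAt_const y (4 : ℝ)).div (hasDerivAt_one_add_four_mul_sq y)
    this).const_sub 1).congr_deriv ?_
  field_simp
  ring

theorem hasDerivAt_mkdvRationalProfile_deriv :
    HasDerivAt (fun y : ℝ => 32 * y / (1 + 4 * y ^ 2) ^ 2)
      ((32 - 384 * y ^ 2) / (1 + 4 * y ^ 2) ^ 3) y := by
  have := one_add_four_mul_sq_ne_zero y
  refine (((hasDerivAt_id' y).const_mul 32).fun_div ((hasDerivAt_one_add_four_mul_sq y).fun_pow 2)
    (pow_ne_zero 2 this)).congr_deriv ?_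
  field_simp
  ring

theorem hasDerivAt_mkdvRationalProfile_deriv_deriv :
    HasDerivAt (fun y : ℝ => (32 - 384 * y ^ 2) / (1 + 4 * y ^ 2) ^ 3)
      (y * (6144 * y ^ 2 - 1536) / (1 + 4 * y ^ 2) ^ 4) y := by
  have := one_add_four_mul_sq_ne_zero y
  refine ((((hasDerivAt_pow 2 y).const_mul 384).const_sub 32).fun_div
    ((hasDerivAt_one_add_four_mul_sq y).fun_pow 3) (pow_ne_zero 3 this)).congr_deriv ?_
  field_simp
  ring

end Profile

theorem deriv_deriv_deriv_mkdvRationalProfile :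
    deriv (deriv (deriv mkdvRationalProfile)) =
      fun y => y * (6144 * y ^ 2 - 1536) / (1 + 4 * y ^ 2) ^ 4 := by
  have h₁ : deriv mkdvRationalProfile = fun y => 32 * y / (1 + 4 * y ^ 2) ^ 2 :=
    funext fun y => (hasDerivAt_mkdvRationalProfile y).deriv
  have h₂ : deriv (fun y : ℝ => 32 * y / (1 + 4 * y ^ 2) ^ 2) =
      fun y => (32 - 384 * y ^ 2) / (1 + 4 * y ^ 2) ^ 3 :=
    funext fun y => (hasDerivAt_mkdvRationalProfile_deriv y).deriv
  rw [h₁, h₂]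
  exact funext fun y => (hasDerivAt_mkdvRationalProfile_deriv_deriv y).deriv

theorem mkdvRationalProfile_ode (y : ℝ) :
    -6 * deriv mkdvRationalProfile y
      + 6 * mkdvRationalProfile y ^ 2 * deriv mkdvRationalProfile y
      + deriv (deriv (deriv mkdvRationalProfile)) y = 0 := by
  rw [deriv_deriv_deriv_mkdvRationalProfile, (hasDerivAt_mkdvRationalProfile y).deriv,
    mkdvRationalProfile]
  have := one_add_four_mul_sq_ne_zero y
  field_simp
  ring

theorem stmt_3 (x₀ : ℝ) (u : ℝ → ℝ → ℝ)
    (hu : ∀ x t, u x t = 1 - 4 / (1 + 4 * (x - 6 * t - x₀)^2)) :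
    ∀ x t, deriv (fun s => u x s) t
      + 6 * (u x t)^2 * deriv (fun y => u y t) x
      + deriv (deriv (deriv (fun y => u y t))) x = 0 := by
  intro x t
  have hu_time : (fun s => u x s) = fun s => mkdvRationalProfile (x - 6 * s - x₀) :=
    funext fun s => hu x s
  have hu_space : (fun y => u y t) = fun y => mkdvRationalProfile (y - (6 * t + x₀)) :=
    funext fun y => by rw [hu, mkdvRationalProfile, sub_sub]
  rw [hu_time, deriv_travellingWave_time, hu_space, deriv_comp_sub_const_funext,
    deriv_comp_sub_const_funext, deriv_comp_sub_const_funext, hu, ← mkdvRationalProfile, sub_sub]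
  exact mkdvRationalProfile_ode _
end

section
/- Under the Hamiltonian flow of H₀ above, the quantity H₁ = 4(λ₁³p₁q₁ + λ₂³p₂q₂) - 4(λ₁p₁q₁ + λ₂p₂q₂)² - (λ₁(p₁²-q₁²) + λ₂(p₂²-q₂²))² + 2(p₁²+q₁²+p₂²+q₂²)(λ₁²(p₁²+q₁²) + λ₂²(p₂²+q₂²)) is also conserved. -/
/-!
The derivative of `H₁` along a trajectory is its Poisson bracket with the Hamiltonian
`H₀ = u²/4 + λ₁ p₁ q₁ + λ₂ p₂ q₂` generating the flow (here `p_j' = ∂H₀/∂q_j`, `q_j' = -∂H₀/∂p_j`),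
and this bracket vanishes identically as a polynomial in `λ, p, q`.
-/

namespace TwoModeFlow

def H₁ (l₁ l₂ p₁ q₁ p₂ q₂ : ℝ) : ℝ :=
  4 * (l₁^3 * p₁ * q₁ + l₂^3 * p₂ * q₂)
    - 4 * (l₁ * p₁ * q₁ + l₂ * p₂ * q₂)^2
    - (l₁ * (p₁^2 - q₁^2) + l₂ * (p₂^2 - q₂^2))^2
    + 2 * (p₁^2 + q₁^2 + p₂^2 + q₂^2) * (l₁^2 * (p₁^2 + q₁^2) + l₂^2 * (p₂^2 + q₂^2))

/-- Since `H₁` is invariant under `p_j ↔ q_j` and under `1 ↔ 2`, the other three partial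
derivatives of `H₁` are obtained from this one by permuting the arguments. -/
def H₁_deriv_p₁ (l₁ l₂ p₁ q₁ p₂ q₂ : ℝ) : ℝ :=
  4 * l₁^3 * q₁
    - 8 * l₁ * q₁ * (l₁ * p₁ * q₁ + l₂ * p₂ * q₂)
    - 4 * l₁ * p₁ * (l₁ * (p₁^2 - q₁^2) + l₂ * (p₂^2 - q₂^2))
    + 4 * p₁ * (l₁^2 * (p₁^2 + q₁^2) + l₂^2 * (p₂^2 + q₂^2))
    + 4 * l₁^2 * p₁ * (p₁^2 + q₁^2 + p₂^2 + q₂^2)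

theorem hasDerivAt_H₁_comp (l₁ l₂ : ℝ) {p₁ q₁ p₂ q₂ : ℝ → ℝ} {p₁' q₁' p₂' q₂' x : ℝ}
    (hp₁ : HasDerivAt p₁ p₁' x) (hq₁ : HasDerivAt q₁ q₁' x)
    (hp₂ : HasDerivAt p₂ p₂' x) (hq₂ : HasDerivAt q₂ q₂' x) :
    HasDerivAt (fun x => H₁ l₁ l₂ (p₁ x) (q₁ x) (p₂ x) (q₂ x))
      (H₁_deriv_p₁ l₁ l₂ (p₁ x) (q₁ x) (p₂ x) (q₂ x) * p₁'
        + H₁_deriv_p₁ l₁ l₂ (q₁ x) (p₁ x) (q₂ x) (p₂ x) * q₁'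
        + H₁_deriv_p₁ l₂ l₁ (p₂ x) (q₂ x) (p₁ x) (q₁ x) * p₂'
        + H₁_deriv_p₁ l₂ l₁ (q₂ x) (p₂ x) (q₁ x) (p₁ x) * q₂') x := by
  have hS := ((hp₁.const_mul l₁).mul hq₁).add ((hp₂.const_mul l₂).mul hq₂)
  have hD := ((hp₁.pow 2).sub (hq₁.pow 2)).const_mul l₁ |>.add
    (((hp₂.pow 2).sub (hq₂.pow 2)).const_mul l₂)
  have hu := (((hp₁.pow 2).add (hq₁.pow 2)).add (hp₂.pow 2)).add (hq₂.pow 2)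
  have hE := (((hp₁.pow 2).add (hq₁.pow 2)).const_mul (l₁^2)).add
    (((hp₂.pow 2).add (hq₂.pow 2)).const_mul (l₂^2))
  have hC := (((hp₁.const_mul (l₁^3)).mul hq₁).add ((hp₂.const_mul (l₂^3)).mul hq₂)).const_mul 4
  refine (((hC.sub ((hS.pow 2).const_mul 4)).sub (hD.pow 2)).add
    ((hu.const_mul 2).mul hE)).congr_deriv ?_
  simp only [H₁_deriv_p₁, Pi.add_apply, Pi.sub_apply, Pi.mul_apply, Pi.pow_apply, Nat.cast_ofNat]
  ring

theorem poissonBracket_H₁_H₀_eq_zero (l₁ l₂ p₁ q₁ p₂ q₂ : ℝ) :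
    H₁_deriv_p₁ l₁ l₂ p₁ q₁ p₂ q₂ * ((p₁^2 + q₁^2 + p₂^2 + q₂^2) * q₁ + l₁ * p₁)
      + H₁_deriv_p₁ l₁ l₂ q₁ p₁ q₂ p₂ * (-(p₁^2 + q₁^2 + p₂^2 + q₂^2) * p₁ - l₁ * q₁)
      + H₁_deriv_p₁ l₂ l₁ p₂ q₂ p₁ q₁ * ((p₁^2 + q₁^2 + p₂^2 + q₂^2) * q₂ + l₂ * p₂)
      + H₁_deriv_p₁ l₂ l₁ q₂ p₂ q₁ p₁ * (-(p₁^2 + q₁^2 + p₂^2 + q₂^2) * p₂ - l₂ * q₂) = 0 := by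
  simp only [H₁_deriv_p₁]
  ring

end TwoModeFlow

open TwoModeFlow in
theorem stmt_10 (l₁ l₂ : ℝ) (p₁ q₁ p₂ q₂ : ℝ → ℝ)
    (hp₁ : ∀ x, HasDerivAt p₁ ((p₁ x^2 + q₁ x^2 + p₂ x^2 + q₂ x^2) * q₁ x + l₁ * p₁ x) x)
    (hq₁ : ∀ x, HasDerivAt q₁ (-(p₁ x^2 + q₁ x^2 + p₂ x^2 + q₂ x^2) * p₁ x - l₁ * q₁ x) x)
    (hp₂ : ∀ x, HasDerivAt p₂ ((p₁ x^2 + q₁ x^2 + p₂ x^2 + q₂ x^2) * q₂ x + l₂ * p₂ x) x)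
    (hq₂ : ∀ x, HasDerivAt q₂ (-(p₁ x^2 + q₁ x^2 + p₂ x^2 + q₂ x^2) * p₂ x - l₂ * q₂ x) x) :
    ∀ x, deriv (fun x => 4 * (l₁^3 * p₁ x * q₁ x + l₂^3 * p₂ x * q₂ x)
      - 4 * (l₁ * p₁ x * q₁ x + l₂ * p₂ x * q₂ x)^2
      - (l₁ * (p₁ x^2 - q₁ x^2) + l₂ * (p₂ x^2 - q₂ x^2))^2
      + 2 * (p₁ x^2 + q₁ x^2 + p₂ x^2 + q₂ x^2)
          * (l₁^2 * (p₁ x^2 + q₁ x^2) + l₂^2 * (p₂ x^2 + q₂ x^2))) x = 0 := fun x =>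
  ((hasDerivAt_H₁_comp l₁ l₂ (hp₁ x) (hq₁ x) (hp₂ x) (hq₂ x)).deriv).trans
    (poissonBracket_H₁_H₀_eq_zero l₁ l₂ _ _ _ _)
end

section
/- With u and the Hamiltonian system as above and E₀ := u² + 4λ₁p₁q₁ + 4λ₂p₂q₂ (a constant), u satisfies u'' + 2u³ - (2E₀ + 4λ₁² + 4λ₂²)u = -4λ₂²(p₁²+q₁²) - 4λ₁²(p₂²+q₂²). -/
/-!
The coupling `u` only rotates each pair `(pⱼ, qⱼ)`, so it drops out of `(pⱼ² + qⱼ²)' = 2λⱼ(pⱼ² - qⱼ²)`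
and survives only in `(pⱼ² - qⱼ²)' = 4u pⱼ qⱼ + 2λⱼ(pⱼ² + qⱼ²)`. Hence
`u'' = 8u(λ₁p₁q₁ + λ₂p₂q₂) + 4λ₁²(p₁² + q₁²) + 4λ₂²(p₂² + q₂²)`, and with
`4(λ₁p₁q₁ + λ₂p₂q₂) = E₀ - u²` the identity is a polynomial one.
-/

section RotatingPair

variable {p q : ℝ → ℝ} {w l x : ℝ}

theorem hasDerivAt_sq_add_sq (hp : HasDerivAt p (w * q x + l * p x) x)
    (hq : HasDerivAt q (-w * p x - l * q x) x) :
    HasDerivAt (fun y => p y ^ 2 + q y ^ 2) (2 * l * (p x ^ 2 - q x ^ 2)) x :=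
  ((hp.fun_pow 2).add (hq.fun_pow 2)).congr_deriv (by ring)

theorem hasDerivAt_sq_sub_sq (hp : HasDerivAt p (w * q x + l * p x) x)
    (hq : HasDerivAt q (-w * p x - l * q x) x) :
    HasDerivAt (fun y => p y ^ 2 - q y ^ 2) (4 * w * p x * q x + 2 * l * (p x ^ 2 + q x ^ 2)) x :=
  ((hp.fun_pow 2).sub (hq.fun_pow 2)).congr_deriv (by ring)

end RotatingPair

theorem stmt_12 (l₁ l₂ : ℝ) (p₁ q₁ p₂ q₂ : ℝ → ℝ)
    (hp₁ : ∀ x, HasDerivAt p₁ ((p₁ x^2 + q₁ x^2 + p₂ x^2 + q₂ x^2) * q₁ x + l₁ * p₁ x) x)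
    (hq₁ : ∀ x, HasDerivAt q₁ (-(p₁ x^2 + q₁ x^2 + p₂ x^2 + q₂ x^2) * p₁ x - l₁ * q₁ x) x)
    (hp₂ : ∀ x, HasDerivAt p₂ ((p₁ x^2 + q₁ x^2 + p₂ x^2 + q₂ x^2) * q₂ x + l₂ * p₂ x) x)
    (hq₂ : ∀ x, HasDerivAt q₂ (-(p₁ x^2 + q₁ x^2 + p₂ x^2 + q₂ x^2) * p₂ x - l₂ * q₂ x) x) :
    ∀ x, (fun u E₀ => deriv (deriv (fun y => p₁ y^2 + q₁ y^2 + p₂ y^2 + q₂ y^2)) x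
        + 2 * u^3 - (2 * E₀ + 4 * l₁^2 + 4 * l₂^2) * u
        = -4 * l₂^2 * (p₁ x^2 + q₁ x^2) - 4 * l₁^2 * (p₂ x^2 + q₂ x^2))
      (p₁ x^2 + q₁ x^2 + p₂ x^2 + q₂ x^2)
      ((p₁ x^2 + q₁ x^2 + p₂ x^2 + q₂ x^2)^2 + 4 * l₁ * p₁ x * q₁ x + 4 * l₂ * p₂ x * q₂ x) := by
  intro x
  have hu_eq : (fun y => p₁ y ^ 2 + q₁ y ^ 2 + p₂ y ^ 2 + q₂ y ^ 2)
      = fun y => (p₁ y ^ 2 + q₁ y ^ 2) + (p₂ y ^ 2 + q₂ y ^ 2) := by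
    funext y; ring
  have hu' : deriv (fun y => p₁ y ^ 2 + q₁ y ^ 2 + p₂ y ^ 2 + q₂ y ^ 2)
      = fun y => 2 * l₁ * (p₁ y ^ 2 - q₁ y ^ 2) + 2 * l₂ * (p₂ y ^ 2 - q₂ y ^ 2) := by
    rw [hu_eq]
    funext y
    exact ((hasDerivAt_sq_add_sq (hp₁ y) (hq₁ y)).fun_add (hasDerivAt_sq_add_sq (hp₂ y) (hq₂ y))).deriv
  have hu'' := ((hasDerivAt_sq_sub_sq (hp₁ x) (hq₁ x)).const_mul (2 * l₁)).fun_add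
    ((hasDerivAt_sq_sub_sq (hp₂ x) (hq₂ x)).const_mul (2 * l₂))
  show _ = _
  rw [hu', hu''.deriv]
  ring
end

section
/- The function u(x) = -1 + 2(1-b²)/(1 - b cos(2√(1-b²) x)) with 0 ≤ b < 1 satisfies the first-order invariant (u')² + u⁴ - (2+4b²)u² + (1-4b²) = 8b² u. -/
/-! Put `s = √(1 - b²)` and `D = 1 - b cos (2 s x)`, so that `u = -1 + 2 s² / D` and
`u' = -2 s² D' / D²` with `D' = 2 b s sin (2 s x)`. Since `b² sin² = b² - (1 - D)²`, both sides of
the identity are rational functions of `D` alone, and it reduces to clearing denominators. -/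

open Real

lemma one_sub_mul_cos_pos {b : ℝ} (hb : |b| < 1) (θ : ℝ) : 0 < 1 - b * cos θ := by
  have : b * cos θ ≤ |b| :=
    calc b * cos θ ≤ |b * cos θ| := le_abs_self _
      _ = |b| * |cos θ| := abs_mul _ _
      _ ≤ |b| := mul_le_of_le_one_right (abs_nonneg _) (abs_cos_le_one θ)
  linarith

lemma hasDerivAt_one_sub_mul_cos (b ω x : ℝ) :
    HasDerivAt (fun y => 1 - b * cos (ω * y)) (b * ω * sin (ω * x)) x := by
  have hcos : HasDerivAt (fun y => cos (ω * y)) (-sin (ω * x) * ω) x :=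
    (hasDerivAt_cos _).comp x ((hasDerivAt_id x).const_mul ω |>.congr_deriv (mul_one ω))
  exact ((hcos.const_mul b).const_sub 1).congr_deriv (by ring)

lemma hasDerivAt_const_add_div_one_sub_mul_cos (a k b ω x : ℝ)
    (hx : 1 - b * cos (ω * x) ≠ 0) :
    HasDerivAt (fun y => a + k / (1 - b * cos (ω * y)))
      (-(k * (b * ω * sin (ω * x))) / (1 - b * cos (ω * x)) ^ 2) x := by
  have := ((hasDerivAt_const x k).div (hasDerivAt_one_sub_mul_cos b ω x) hx).const_add a
  exact this.congr_deriv (by ring)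

lemma quartic_invariant_of_sin_sq_add_cos_sq {b s c σ : ℝ} (hσc : σ ^ 2 + c ^ 2 = 1)
    (hs : s ^ 2 = 1 - b ^ 2) (hD : 1 - b * c ≠ 0) :
    (-(2 * (1 - b ^ 2) * (b * (2 * s) * σ)) / (1 - b * c) ^ 2) ^ 2
        + (-1 + 2 * (1 - b ^ 2) / (1 - b * c)) ^ 4
        - (2 + 4 * b ^ 2) * (-1 + 2 * (1 - b ^ 2) / (1 - b * c)) ^ 2 + (1 - 4 * b ^ 2)
      = 8 * b ^ 2 * (-1 + 2 * (1 - b ^ 2) / (1 - b * c)) := by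
  have hderiv_sq : (-(2 * (1 - b ^ 2) * (b * (2 * s) * σ)) / (1 - b * c) ^ 2) ^ 2
      = 16 * (1 - b ^ 2) ^ 3 * b ^ 2 * (1 - c ^ 2) / (1 - b * c) ^ 4 := by
    rw [div_pow, ← eq_sub_of_add_eq hσc]
    linear_combination 16 * (1 - b ^ 2) ^ 2 * b ^ 2 * σ ^ 2 * hs / (1 - b * c) ^ 4
  rw [hderiv_sq]
  field_simp
  ring

theorem stmt_14 (b : ℝ) (hb0 : 0 ≤ b) (hb1 : b < 1) (u : ℝ → ℝ)
    (hu : ∀ x, u x = -1 + 2 * (1 - b^2) / (1 - b * Real.cos (2 * Real.sqrt (1 - b^2) * x))) :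
    ∀ x, (deriv u x)^2 + (u x)^4 - (2 + 4 * b^2) * (u x)^2 + (1 - 4 * b^2) = 8 * b^2 * u x := by
  intro x
  set s := √(1 - b ^ 2)
  have hs : s ^ 2 = 1 - b ^ 2 := sq_sqrt (by nlinarith)
  have hD : 1 - b * cos (2 * s * x) ≠ 0 :=
    (one_sub_mul_cos_pos (abs_lt.2 ⟨by linarith, hb1⟩) _).ne'
  have hderiv := hasDerivAt_const_add_div_one_sub_mul_cos (-1) (2 * (1 - b ^ 2)) b (2 * s) x hD
  rw [← funext hu] at hderiv
  rw [hderiv.deriv, hu x]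
  exact quartic_invariant_of_sin_sq_add_cos_sq (sin_sq_add_cos_sq _) hs hD
end

section
/- Let φ = (p,q) be a nonzero solution of φ' = U(λ)φ with U = [[λ, u],[-u, -λ]], and suppose (p̂,q̂) is defined by p̂ = pφ₁ - 2q/(p²+q²), q̂ = qφ₁ + 2p/(p²+q²) where φ₁ is any differentiable function with φ₁' = -8λpq/(p²+q²)². Then (p̂,q̂) also solves the same linear system and the Wronskian satisfies p q̂ - p̂ q = 2. -/
/-!
Write `s = p² + q²`; the `u`-terms cancel in `s' = 2λ(p² - q²)`. The pair `(a, b) = (-2q/s, 2p/s)`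
solves the system up to the forcing term `c • (p, q)` with `c = 8λpq/s² = -φ₁'`, so by variation of
constants `φ₁ • (p, q) + (a, b)` is an exact solution. Its Wronskian with `(p, q)` is
`p b - a q = 2(p² + q²)/s = 2`.
-/

section

variable {lam : ℝ} {u p q : ℝ → ℝ} {x : ℝ}

theorem hasDerivAt_sq_add_sq_of_system
    (hp : HasDerivAt p (lam * p x + u x * q x) x)
    (hq : HasDerivAt q (-(u x) * p x - lam * q x) x) :
    HasDerivAt (fun x => p x ^ 2 + q x ^ 2) (2 * lam * (p x ^ 2 - q x ^ 2)) x := by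
  refine ((hp.fun_pow 2).add (hq.fun_pow 2)).congr_deriv ?_
  ring

theorem hasDerivAt_neg_two_mul_div_sq_add_sq_of_system
    (hp : HasDerivAt p (lam * p x + u x * q x) x)
    (hq : HasDerivAt q (-(u x) * p x - lam * q x) x)
    (hpq : p x ^ 2 + q x ^ 2 ≠ 0) :
    HasDerivAt (fun x => -2 * q x / (p x ^ 2 + q x ^ 2))
      (lam * (-2 * q x / (p x ^ 2 + q x ^ 2)) + u x * (2 * p x / (p x ^ 2 + q x ^ 2)) +
        8 * lam * p x * q x / (p x ^ 2 + q x ^ 2) ^ 2 * p x) x := by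
  refine ((hq.const_mul (-2)).div (hasDerivAt_sq_add_sq_of_system hp hq) hpq).congr_deriv ?_
  field_simp
  ring

theorem hasDerivAt_two_mul_div_sq_add_sq_of_system
    (hp : HasDerivAt p (lam * p x + u x * q x) x)
    (hq : HasDerivAt q (-(u x) * p x - lam * q x) x)
    (hpq : p x ^ 2 + q x ^ 2 ≠ 0) :
    HasDerivAt (fun x => 2 * p x / (p x ^ 2 + q x ^ 2))
      (-(u x) * (-2 * q x / (p x ^ 2 + q x ^ 2)) - lam * (2 * p x / (p x ^ 2 + q x ^ 2)) +
        8 * lam * p x * q x / (p x ^ 2 + q x ^ 2) ^ 2 * q x) x := by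
  refine ((hp.const_mul 2).div (hasDerivAt_sq_add_sq_of_system hp hq) hpq).congr_deriv ?_
  field_simp
  ring

theorem hasDerivAt_mul_add_of_system_of_forced {f a b : ℝ → ℝ} {c : ℝ}
    (hp : HasDerivAt p (lam * p x + u x * q x) x)
    (hq : HasDerivAt q (-(u x) * p x - lam * q x) x)
    (hf : HasDerivAt f (-c) x)
    (ha : HasDerivAt a (lam * a x + u x * b x + c * p x) x)
    (hb : HasDerivAt b (-(u x) * a x - lam * b x + c * q x) x) :
    HasDerivAt (fun x => p x * f x + a x)
        (lam * (p x * f x + a x) + u x * (q x * f x + b x)) x ∧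
      HasDerivAt (fun x => q x * f x + b x)
        (-(u x) * (p x * f x + a x) - lam * (q x * f x + b x)) x := by
  constructor
  · refine ((hp.mul hf).add ha).congr_deriv ?_
    ring
  · refine ((hq.mul hf).add hb).congr_deriv ?_
    ring

end

theorem stmt_18 (lam : ℝ) (u p q φ₁ : ℝ → ℝ)
    (hp : ∀ x, HasDerivAt p (lam * p x + u x * q x) x)
    (hq : ∀ x, HasDerivAt q (-(u x) * p x - lam * q x) x)
    (hpq : ∀ x, p x^2 + q x^2 ≠ 0)
    (hφ : ∀ x, HasDerivAt φ₁ (-8 * lam * p x * q x / (p x^2 + q x^2)^2) x)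
    (P Q : ℝ → ℝ)
    (hP : ∀ x, P x = p x * φ₁ x - 2 * q x / (p x^2 + q x^2))
    (hQ : ∀ x, Q x = q x * φ₁ x + 2 * p x / (p x^2 + q x^2)) :
    (∀ x, HasDerivAt P (lam * P x + u x * Q x) x) ∧
    (∀ x, HasDerivAt Q (-(u x) * P x - lam * Q x) x) ∧
    (∀ x, p x * Q x - P x * q x = 2) := by
  have hPe : P = fun x => p x * φ₁ x + -2 * q x / (p x ^ 2 + q x ^ 2) :=
    funext fun x => by rw [hP x]; ring
  have hQe : Q = fun x => q x * φ₁ x + 2 * p x / (p x ^ 2 + q x ^ 2) := funext hQ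
  have hsol : ∀ x, HasDerivAt P (lam * P x + u x * Q x) x ∧
      HasDerivAt Q (-(u x) * P x - lam * Q x) x := by
    intro x
    subst hPe hQe
    exact hasDerivAt_mul_add_of_system_of_forced (hp x) (hq x)
      (a := fun x => -2 * q x / (p x ^ 2 + q x ^ 2)) (b := fun x => 2 * p x / (p x ^ 2 + q x ^ 2))
      (c := 8 * lam * p x * q x / (p x ^ 2 + q x ^ 2) ^ 2) ((hφ x).congr_deriv (by ring))
      (hasDerivAt_neg_two_mul_div_sq_add_sq_of_system (hp x) (hq x) (hpq x))
      (hasDerivAt_two_mul_div_sq_add_sq_of_system (hp x) (hq x) (hpq x))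
  refine ⟨fun x => (hsol x).1, fun x => (hsol x).2, fun x => ?_⟩
  rw [hP, hQ]
  field_simp [hpq x]
  ring
end
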